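/- Let A_τ ∈ ℝⁿˣⁿ, B_τ ∈ ℝⁿˣᵐ, τ ≥ 0, and let χ̄₁,…,χ̄ₙ ∈ [0,1), ω̄ ≥ 0, η, d̄, ε̄ ∈ ℝⁿ nonnegative. Define Π_A = conv({χ_v A_τ : χ_v ∈ V}) and Π_B = conv({(χ_v − ω_v(I+χ_v))B_τ : χ_v ∈ V, ω_v ∈ {0,ω̄}}), where V = {diag(s₁χ̄₁,…,sₙχ̄ₙ) : s ∈ {−1,1}ⁿ}. Suppose x⁺ = A_τ x + τ·Δ(x) + (1−ω)·B_τ u + d with ω ∈ [0,ω̄], |dᵢ| ≤ d̄ᵢ, |Δᵢ(x)| ≤ ηᵢ‖x‖; and suppose y = (I+χ)x + ε and y⁺ = (I+χ⁺)x⁺ + ε⁺, where χ, χ⁺ are diagonal with |χᵢ|,|χ⁺ᵢ| ≤ χ̄ᵢ and |εᵢ|,|ε⁺ᵢ| ≤ ε̄ᵢ. Then there exist matrices Δ̂_A ∈ Π_A and Δ̂_B ∈ Π_B and a vector d̂ ∈ ℝⁿ with |d̂ᵢ| ≤ δ̂ᵢ for all i, where δ̂ᵢ = (1+χ̄ᵢ)·τ·ηᵢ·(maxⱼ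 1/(1−χ̄ⱼ))·(‖y‖+‖ε̄‖) + (1+χ̄ᵢ)·d̄ᵢ + ε̄ᵢ, such that y⁺ = (A_τ + Δ̂_A)·x + (B_τ + Δ̂_B)·u + d̂. -/

import Mathlib

/-!
The witnesses are read off the model: `Δ̂_A = χ⁺ A_τ`, `Δ̂_B = (χ⁺ - ω (I + χ⁺)) B_τ` and
`d̂ = (I + χ⁺)(τ Δ(x) + d) + ε⁺`, so the identity for `y⁺` is pure algebra. The diagonal matrix
`χ⁺` lies in the box whose vertices form `V`, hence in its convex hull; `Δ̂_A` is a linear image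
of `χ⁺`, while `Δ̂_B` is affine in `χ⁺` and in `ω` separately, which is enough to land in `Π_B`.
For `d̂`, the state is recovered from the measurement `y = (I + χ) x + ε` through
`|xⱼ| ≤ (1 - χ̄ⱼ)⁻¹ |yⱼ - εⱼ|`, which gives `‖x‖ ≤ maxⱼ (1 - χ̄ⱼ)⁻¹ (‖y‖ + ‖ε̄‖)`.
-/

/-- The Euclidean (ℓ²) norm of a vector in `Fin n → ℝ`. -/
noncomputable def euclNorm {n : ℕ} (x : Fin n → ℝ) : ℝ :=
  ‖(WithLp.equiv 2 (Fin n → ℝ)).symm x‖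

open Set Matrix

section SeparatelyAffine

variable {𝕜 E F G : Type*} [Ring 𝕜] [PartialOrder 𝕜]
  [AddCommGroup E] [Module 𝕜 E] [AddCommGroup F] [Module 𝕜 F] [AddCommGroup G] [Module 𝕜 G]

theorem AffineMap.mem_convexHull_image (f : E →ᵃ[𝕜] F) {s : Set E} {x : E}
    (hx : x ∈ convexHull 𝕜 s) : f x ∈ convexHull 𝕜 (f '' s) :=
  f.image_convexHull s ▸ mem_image_of_mem f hx

theorem image2_convexHull_subset_convexHull_image2 (f : E → F → G) {s : Set E} {t : Set F}
    (hf₁ : ∀ y, ∃ g : E →ᵃ[𝕜] G, ∀ x, g x = f x y)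
    (hf₂ : ∀ x, ∃ g : F →ᵃ[𝕜] G, ∀ y, g y = f x y) :
    image2 f (convexHull 𝕜 s) (convexHull 𝕜 t) ⊆ convexHull 𝕜 (image2 f s t) := by
  have hleft : image2 f (convexHull 𝕜 s) t ⊆ convexHull 𝕜 (image2 f s t) := by
    rintro _ ⟨x, hx, y, hy, rfl⟩
    obtain ⟨g, hg⟩ := hf₁ y
    rw [← hg]
    refine convexHull_mono ?_ (g.mem_convexHull_image hx)
    rintro _ ⟨x', hx', rfl⟩
    exact ⟨x', hx', y, hy, (hg x').symm⟩
  rintro _ ⟨x, hx, y, hy, rfl⟩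
  obtain ⟨g, hg⟩ := hf₂ x
  rw [← hg]
  refine convexHull_min ?_ (convex_convexHull 𝕜 _) (g.mem_convexHull_image hy)
  rintro _ ⟨y', hy', rfl⟩
  exact hleft ⟨x, hx, y', hy', (hg y').symm⟩

end SeparatelyAffine

theorem mem_convexHull_pi_pair_neg_of_abs_le {ι : Type*} [Finite ι] {c v : ι → ℝ}
    (h : ∀ i, |v i| ≤ c i) : v ∈ convexHull ℝ (univ.pi fun i => ({-c i, c i} : Set ℝ)) :=
  mem_convexHull_pi fun i _ => by
    rw [convexHull_pair, segment_eq_Icc (neg_le_self ((abs_nonneg _).trans (h i)))]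
    exact abs_le.mp (h i)

theorem diagonal_mem_convexHull_signed_diagonal {ι : Type*} [Fintype ι] [DecidableEq ι]
    {c v : ι → ℝ} (h : ∀ i, |v i| ≤ c i) :
    diagonal v ∈ convexHull ℝ {M | ∃ s : ι → ℝ, (∀ i, s i = 1 ∨ s i = -1) ∧
      M = diagonal fun i => s i * c i} := by
  refine convexHull_mono ?_ ((diagonalLinearMap ι ℝ ℝ).toAffineMap.mem_convexHull_image
    (mem_convexHull_pi_pair_neg_of_abs_le h))
  rintro _ ⟨w, hw, rfl⟩
  have hsign : ∀ i, ∃ s : ℝ, (s = 1 ∨ s = -1) ∧ w i = s * c i := fun i => by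
    rcases hw i (mem_univ i) with hi | hi
    · exact ⟨-1, Or.inr rfl, by simp [hi]⟩
    · exact ⟨1, Or.inl rfl, by simp_all⟩
  choose s hs hws using hsign
  exact ⟨s, hs, by simp [funext hws]⟩

theorem sub_smul_one_add_mul_mem_convexHull {ι κ : Type*} [Fintype ι] [DecidableEq ι]
    {V : Set (Matrix ι ι ℝ)} {D : Matrix ι ι ℝ} (hD : D ∈ convexHull ℝ V)
    {ω ωbar : ℝ} (hω : ω ∈ Icc 0 ωbar) (B : Matrix ι κ ℝ) :
    (D - ω • (1 + D)) * B ∈ convexHull ℝ {N | ∃ χv ∈ V, ∃ ωv ∈ ({0, ωbar} : Set ℝ),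
      N = (χv - ωv • (1 + χv)) * B} := by
  have hω' : ω ∈ convexHull ℝ {0, ωbar} := by
    rwa [convexHull_pair, segment_eq_Icc (hω.1.trans hω.2)]
  refine convexHull_mono ?_ (image2_convexHull_subset_convexHull_image2
    (fun M w => (M - w • (1 + M)) * B) (fun w => ?_) (fun M => ?_) (mem_image2_of_mem hD hω'))
  · rintro _ ⟨M, hM, w, hw, rfl⟩
    exact ⟨M, hM, w, hw, rfl⟩
  · -- `M - w • (1 + M) = (1 - w) • (M + 1) - 1`
    refine ⟨(mulRightLinearMap ι ℝ B).toAffineMap.comp (AffineMap.homothety (-1) (1 - w)),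
      fun M => ?_⟩
    simp only [AffineMap.coe_comp, Function.comp_apply, AffineMap.homothety_apply,
      vsub_eq_sub, vadd_eq_add, LinearMap.coe_toAffineMap, mulRightLinearMap_apply]
    congr 1
    module
  · refine ⟨AffineMap.lineMap (M * B) (-B), fun w => ?_⟩
    simp only [AffineMap.lineMap_apply_module, Matrix.sub_mul, Matrix.add_mul,
      Matrix.one_mul, Matrix.smul_mul]
    module

theorem euclNorm_smul {n : ℕ} (c : ℝ) (a : Fin n → ℝ) :
    euclNorm (c • a) = |c| * euclNorm a := by
  rw [euclNorm, euclNorm, WithLp.equiv_symm_apply, WithLp.toLp_smul, norm_smul, Real.norm_eq_abs]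

theorem euclNorm_sub_le {n : ℕ} (a b : Fin n → ℝ) :
    euclNorm (a - b) ≤ euclNorm a + euclNorm b := by
  simp only [euclNorm, WithLp.equiv_symm_apply, WithLp.toLp_sub]
  exact norm_sub_le _ _

theorem euclNorm_le_of_abs_le {n : ℕ} {a b : Fin n → ℝ} (h : ∀ i, |a i| ≤ |b i|) :
    euclNorm a ≤ euclNorm b := by
  simp only [euclNorm, EuclideanSpace.norm_eq, WithLp.equiv_symm_apply, Real.norm_eq_abs]
  exact Real.sqrt_le_sqrt (Finset.sum_le_sum fun i _ => pow_le_pow_left₀ (abs_nonneg _) (h i) 2)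

theorem one_add_diagonal_mulVec_apply {ι R : Type*} [Fintype ι] [DecidableEq ι] [CommRing R]
    (χ x : ι → R) (i : ι) : ((1 + diagonal χ) *ᵥ x) i = (1 + χ i) * x i := by
  rw [add_mulVec, one_mulVec, Pi.add_apply, mulVec_diagonal, add_mul, one_mul]

theorem abs_le_inv_one_sub_mul_abs_one_add_mul {a χ c : ℝ} (hχ : |χ| ≤ c) (hc : c < 1) :
    |a| ≤ (1 - c)⁻¹ * |(1 + χ) * a| := by
  rw [← div_eq_inv_mul, le_div_iff₀ (sub_pos.mpr hc), abs_mul, mul_comm]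
  gcongr
  linarith [neg_abs_le χ, le_abs_self (1 + χ)]

theorem euclNorm_le_of_eq_one_add_diagonal_mulVec_add {n : ℕ} {x y ε εbar χ c : Fin n → ℝ}
    (hy : y = (1 + diagonal χ) *ᵥ x + ε) (hχ : ∀ i, |χ i| ≤ c i) (hc : ∀ i, c i < 1)
    (hε : ∀ i, |ε i| ≤ εbar i) :
    euclNorm x ≤ (⨆ j, (1 - c j)⁻¹) * (euclNorm y + euclNorm εbar) := by
  set M := ⨆ j, (1 - c j)⁻¹
  have hM : 0 ≤ M := Real.iSup_nonneg fun j => inv_nonneg.mpr (sub_pos.mpr (hc j)).le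
  have hx : ∀ j, |x j| ≤ |(M • (y - ε)) j| := fun j => by
    have hyj : y j - ε j = (1 + χ j) * x j := by
      rw [hy, Pi.add_apply, one_add_diagonal_mulVec_apply, add_sub_cancel_right]
    calc |x j| ≤ (1 - c j)⁻¹ * |(1 + χ j) * x j| :=
          abs_le_inv_one_sub_mul_abs_one_add_mul (hχ j) (hc j)
      _ ≤ M * |y j - ε j| := by
          rw [hyj]
          gcongr
          exact le_ciSup (f := fun j => (1 - c j)⁻¹) (finite_range _).bddAbove j
      _ = |(M • (y - ε)) j| := by simp [abs_mul, abs_of_nonneg hM]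
  have hεbar : euclNorm ε ≤ euclNorm εbar :=
    euclNorm_le_of_abs_le fun j => (hε j).trans (le_abs_self _)
  calc euclNorm x ≤ euclNorm (M • (y - ε)) := euclNorm_le_of_abs_le hx
    _ = M * euclNorm (y - ε) := by rw [euclNorm_smul, abs_of_nonneg hM]
    _ ≤ M * (euclNorm y + euclNorm εbar) := by
        gcongr
        exact (euclNorm_sub_le y ε).trans (by gcongr)

theorem abs_one_add_mul_add_add_le {χ c τ Δ η X Y d dbar ε εbar : ℝ} (hχ : |χ| ≤ c)
    (hτ : 0 ≤ τ) (hη : 0 ≤ η) (hΔ : |Δ| ≤ η * X) (hXY : X ≤ Y) (hd : |d| ≤ dbar)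
    (hε : |ε| ≤ εbar) :
    |(1 + χ) * (τ * Δ + d) + ε| ≤ (1 + c) * τ * η * Y + (1 + c) * dbar + εbar := by
  have hc : 0 ≤ 1 + c := by linarith [(abs_nonneg χ).trans hχ]
  have h1 : |1 + χ| ≤ 1 + c :=
    abs_le.mpr ⟨by linarith [neg_abs_le χ], by linarith [le_abs_self χ]⟩
  have h2 : |τ * Δ + d| ≤ τ * (η * Y) + dbar := by
    refine (abs_add_le _ _).trans ?_
    rw [abs_mul, abs_of_nonneg hτ]
    gcongr
    exact hΔ.trans (by gcongr)
  calc |(1 + χ) * (τ * Δ + d) + ε| ≤ |1 + χ| * |τ * Δ + d| + |ε| := by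
        rw [← abs_mul]; exact abs_add_le _ _
    _ ≤ (1 + c) * (τ * (η * Y) + dbar) + εbar := by gcongr
    _ = (1 + c) * τ * η * Y + (1 + c) * dbar + εbar := by ring

theorem one_add_mulVec_eq_uncertain_model {ι κ R : Type*} [Fintype ι] [DecidableEq ι] [Fintype κ]
    [CommRing R]
    (P A : Matrix ι ι R) (B : Matrix ι κ R) (x w d e : ι → R) (u : κ → R) (ω : R) :
    (1 + P) *ᵥ (A *ᵥ x + w + (1 - ω) • B *ᵥ u + d) + e =
      (A + P * A) *ᵥ x + (B + (P - ω • (1 + P)) * B) *ᵥ u + ((1 + P) *ᵥ (w + d) + e) := by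
  have hA : A + P * A = (1 + P) * A := by rw [Matrix.add_mul, Matrix.one_mul]
  have hB : B + (P - ω • (1 + P)) * B = (1 - ω) • ((1 + P) * B) := by
    simp only [Matrix.sub_mul, Matrix.add_mul, Matrix.one_mul, Matrix.smul_mul]
    module
  rw [hA, hB]
  simp only [← mulVec_mulVec, smul_mulVec, mulVec_add, mulVec_smul]
  abel

theorem stmt_8_general (n m : ℕ)
    (Aτ : Matrix (Fin n) (Fin n) ℝ) (Bτ : Matrix (Fin n) (Fin m) ℝ)
    (τ : ℝ) (hτ : 0 ≤ τ)
    (χbar : Fin n → ℝ) (hχbar : ∀ i, 0 ≤ χbar i ∧ χbar i < 1)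
    (ωbar : ℝ)
    (η dbar εbar : Fin n → ℝ)
    (hη : ∀ i, 0 ≤ η i)
    (V : Set (Matrix (Fin n) (Fin n) ℝ))
    (hV : V = {M | ∃ s : Fin n → ℝ, (∀ i, s i = 1 ∨ s i = -1) ∧
        M = Matrix.diagonal (fun i => s i * χbar i)})
    (PiA : Set (Matrix (Fin n) (Fin n) ℝ))
    (hPiA : PiA = convexHull ℝ ((fun χv => χv * Aτ) '' V))
    (PiB : Set (Matrix (Fin n) (Fin m) ℝ))
    (hPiB : PiB = convexHull ℝ {N : Matrix (Fin n) (Fin m) ℝ |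
        ∃ χv ∈ V, ∃ ωv ∈ ({0, ωbar} : Set ℝ), N = (χv - ωv • (1 + χv)) * Bτ})
    (x : Fin n → ℝ) (u : Fin m → ℝ)
    (ω : ℝ) (hω : ω ∈ Set.Icc (0 : ℝ) ωbar)
    (d : Fin n → ℝ) (hd : ∀ i, |d i| ≤ dbar i)
    (Δ : (Fin n → ℝ) → (Fin n → ℝ)) (hΔ : ∀ i, |Δ x i| ≤ η i * euclNorm x)
    (χ χp : Fin n → ℝ)
    (hχ : ∀ i, |χ i| ≤ χbar i) (hχp : ∀ i, |χp i| ≤ χbar i)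
    (ε εp : Fin n → ℝ)
    (hε : ∀ i, |ε i| ≤ εbar i) (hεp : ∀ i, |εp i| ≤ εbar i)
    (xp y yp : Fin n → ℝ)
    (hxp : xp = Aτ.mulVec x + τ • Δ x + (1 - ω) • Bτ.mulVec u + d)
    (hy : y = (1 + Matrix.diagonal χ).mulVec x + ε)
    (hyp : yp = (1 + Matrix.diagonal χp).mulVec xp + εp) :
    ∃ ΔA ∈ PiA, ∃ ΔB ∈ PiB, ∃ dh : Fin n → ℝ,
      (∀ i, |dh i| ≤ (1 + χbar i) * τ * η i * (⨆ j, (1 - χbar j)⁻¹)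
          * (euclNorm y + euclNorm εbar) + (1 + χbar i) * dbar i + εbar i) ∧
      yp = (Aτ + ΔA).mulVec x + (Bτ + ΔB).mulVec u + dh := by
  have hD : diagonal χp ∈ convexHull ℝ V := hV ▸ diagonal_mem_convexHull_signed_diagonal hχp
  have hx := euclNorm_le_of_eq_one_add_diagonal_mulVec_add hy hχ (fun j => (hχbar j).2) hε
  refine ⟨diagonal χp * Aτ, ?_, (diagonal χp - ω • (1 + diagonal χp)) * Bτ, ?_,
    (1 + diagonal χp) *ᵥ (τ • Δ x + d) + εp, fun i => ?_, ?_⟩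
  · exact hPiA ▸ (mulRightLinearMap (Fin n) ℝ Aτ).toAffineMap.mem_convexHull_image hD
  · exact hPiB ▸ sub_smul_one_add_mul_mem_convexHull hD hω Bτ
  · rw [Pi.add_apply, one_add_diagonal_mulVec_apply, mul_assoc _ (⨆ j, _)]
    exact abs_one_add_mul_add_add_le (hχp i) hτ (hη i) (hΔ i) hx (hd i) (hεp i)
  · rw [hyp, hxp]
    exact one_add_mulVec_eq_uncertain_model _ _ _ _ _ _ _ _ _

/-- **Equivalent uncertain linear model (main modeling result of the paper).**
The attacked, noisy, discretized dynamics are exactly overapproximated by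
`y⁺ = (A_τ + Δ̂_A) x + (B_τ + Δ̂_B) u + d̂` with `Δ̂_A ∈ Π_A`, `Δ̂_B ∈ Π_B` and
`|d̂ᵢ| ≤ δ̂ᵢ := (1+χ̄ᵢ) τ ηᵢ (maxⱼ (1-χ̄ⱼ)⁻¹)(‖y‖+‖ε̄‖) + (1+χ̄ᵢ) d̄ᵢ + ε̄ᵢ`. -/
theorem stmt_8 (n m : ℕ)
    (Aτ : Matrix (Fin n) (Fin n) ℝ) (Bτ : Matrix (Fin n) (Fin m) ℝ)
    (τ : ℝ) (hτ : 0 ≤ τ)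
    (χbar : Fin n → ℝ) (hχbar : ∀ i, 0 ≤ χbar i ∧ χbar i < 1)
    (ωbar : ℝ) (hωbar : 0 ≤ ωbar)
    (η dbar εbar : Fin n → ℝ)
    (hη : ∀ i, 0 ≤ η i) (hdbar : ∀ i, 0 ≤ dbar i) (hεbar : ∀ i, 0 ≤ εbar i)
    (V : Set (Matrix (Fin n) (Fin n) ℝ))
    (hV : V = {M | ∃ s : Fin n → ℝ, (∀ i, s i = 1 ∨ s i = -1) ∧
        M = Matrix.diagonal (fun i => s i * χbar i)})
    (PiA : Set (Matrix (Fin n) (Fin n) ℝ))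
    (hPiA : PiA = convexHull ℝ ((fun χv => χv * Aτ) '' V))
    (PiB : Set (Matrix (Fin n) (Fin m) ℝ))
    (hPiB : PiB = convexHull ℝ {N : Matrix (Fin n) (Fin m) ℝ |
        ∃ χv ∈ V, ∃ ωv ∈ ({0, ωbar} : Set ℝ), N = (χv - ωv • (1 + χv)) * Bτ})
    (x : Fin n → ℝ) (u : Fin m → ℝ)
    (ω : ℝ) (hω : ω ∈ Set.Icc (0 : ℝ) ωbar)
    (d : Fin n → ℝ) (hd : ∀ i, |d i| ≤ dbar i)
    (Δ : (Fin n → ℝ) → (Fin n → ℝ)) (hΔ : ∀ i, |Δ x i| ≤ η i * euclNorm x)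
    (χ χp : Fin n → ℝ)
    (hχ : ∀ i, |χ i| ≤ χbar i) (hχp : ∀ i, |χp i| ≤ χbar i)
    (ε εp : Fin n → ℝ)
    (hε : ∀ i, |ε i| ≤ εbar i) (hεp : ∀ i, |εp i| ≤ εbar i)
    (xp y yp : Fin n → ℝ)
    (hxp : xp = Aτ.mulVec x + τ • Δ x + (1 - ω) • Bτ.mulVec u + d)
    (hy : y = (1 + Matrix.diagonal χ).mulVec x + ε)
    (hyp : yp = (1 + Matrix.diagonal χp).mulVec xp + εp) :
    ∃ ΔA ∈ PiA, ∃ ΔB ∈ PiB, ∃ dh : Fin n → ℝ,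
      (∀ i, |dh i| ≤ (1 + χbar i) * τ * η i * (⨆ j, (1 - χbar j)⁻¹)
          * (euclNorm y + euclNorm εbar) + (1 + χbar i) * dbar i + εbar i) ∧
      yp = (Aτ + ΔA).mulVec x + (Bτ + ΔB).mulVec u + dh :=
  stmt_8_general n m Aτ Bτ τ hτ χbar hχbar ωbar η dbar εbar hη V hV PiA hPiA PiB hPiB x u ω hω d hd
    Δ hΔ χ χp hχ hχp ε εp hε hεp xp y yp hxp hy hyp
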